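/- arXiv:2109.10048 — 4 statements merged into one kernel-verified Lean document; each statement's English description precedes it below -/
import Mathlib

section
/- Let G be a simple undirected graph on {1,…,n} and SQ(x) = −∑_i x_i + ∑_{(i,j)∈\bar{E}, i<j} x_i x_j for x ∈ {0,1}^n, where \bar{E} is the set of non-adjacent pairs. If x minimizes SQ over {0,1}^n, then there exists z ∈ {0,1}^n with SQ(z) = SQ(x) and with zero penalty term (i.e., z_i z_j = 0 for every non-edge pair i < j), so that the support of z is a clique of G. -/
private lemma stmt7_aux (n : ℕ) (G : SimpleGraph (Fin n)) [DecidableRel G.Adj]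
    (SQ : (Fin n → Bool) → ℤ)
    (hSQ : ∀ x, SQ x = -(∑ i, (if x i then (1:ℤ) else 0))
      + ∑ i, ∑ j, if i < j ∧ ¬ G.Adj i j then
          (if x i then (1:ℤ) else 0) * (if x j then (1:ℤ) else 0) else 0) :
    ∀ N (x : Fin n → Bool),
      (Finset.univ.filter (fun i => x i = true)).card ≤ N →
      (∀ y, SQ x ≤ SQ y) →
      ∃ z : Fin n → Bool, SQ z = SQ x ∧
        (∀ i j, i < j → ¬ G.Adj i j →
          (if z i then (1:ℤ) else 0) * (if z j then (1:ℤ) else 0) = 0) ∧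
        G.IsClique {i | z i = true} := by
  intro N
  induction N with
  | zero =>
      intro x hcard hmin
      refine ⟨x, rfl, ?_, ?_⟩
      · intro i j _ _
        have hxi : x i = false := by
          by_contra h
          have : i ∈ Finset.univ.filter (fun i => x i = true) := by
            rw [Bool.not_eq_false] at h; simp [h]
          have := Finset.card_pos.mpr ⟨i, this⟩
          omega
        simp [hxi]
      · intro i hi
        exfalso
        have : i ∈ Finset.univ.filter (fun i => x i = true) := by simpa using hi
        have := Finset.card_pos.mpr ⟨i, this⟩
        omega
  | succ N ih =>
      intro x hcard hmin
      by_cases hgood : ∀ i j, i < j → x i = true → x j = true → G.Adj i j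
      · refine ⟨x, rfl, ?_, ?_⟩
        · intro i j hij hadj
          by_cases hxi : x i = true
          · by_cases hxj : x j = true
            · exact absurd (hgood i j hij hxi hxj) hadj
            · rw [Bool.not_eq_true] at hxj; simp [hxj]
          · rw [Bool.not_eq_true] at hxi; simp [hxi]
        · intro i hi j hj hne
          rcases lt_trichotomy i j with h | h | h
          · exact hgood i j h hi hj
          · exact absurd h hne
          · exact (hgood j i h hj hi).symm
      · push_neg at hgood
        obtain ⟨i, j, hij, hxi, hxj, hadj⟩ := hgood
        set y : Fin n → Bool := Function.update x i false with hy
        have hyi : y i = false := by simp [hy]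
        have hyk : ∀ k, k ≠ i → y k = x k := by
          intro k hk; simp [hy, Function.update_of_ne hk]
        have hyle : ∀ k, (if y k then (1:ℤ) else 0) ≤ (if x k then 1 else 0) := by
          intro k
          by_cases hk : k = i
          · subst hk; simp [hyi, hxi]
          · rw [hyk k hk]
        -- term function
        set t : (Fin n → Bool) → Fin n → Fin n → ℤ :=
          fun w k l => if k < l ∧ ¬ G.Adj k l then
            (if w k then (1:ℤ) else 0) * (if w l then 1 else 0) else 0 with ht
        have htle : ∀ k l, t y k l ≤ t x k l := by
          intro k l
          simp only [ht]
          split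
          · exact mul_le_mul (hyle k) (hyle l) (by positivity) (by positivity)
          · exact le_refl 0
        have htij : t x i j - t y i j = 1 := by
          simp [ht, hij, hadj, hxi, hxj, hyi]
        -- linear sums
        have hL : (∑ k, (if x k then (1:ℤ) else 0))
            = (∑ k, (if y k then (1:ℤ) else 0)) + 1 := by
          rw [← Finset.add_sum_erase _ _ (Finset.mem_univ i),
              ← Finset.add_sum_erase _ (fun k => if y k then (1:ℤ) else 0) (Finset.mem_univ i)]
          have : ∑ k ∈ Finset.univ.erase i, (if x k then (1:ℤ) else 0)
              = ∑ k ∈ Finset.univ.erase i, (if y k then (1:ℤ) else 0) := by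
            apply Finset.sum_congr rfl
            intro k hk
            rw [hyk k (Finset.ne_of_mem_erase hk)]
          rw [this]
          simp [hxi, hyi]
          ring
        -- quadratic sums
        have hP : (∑ k, ∑ l, t y k l) + 1 ≤ ∑ k, ∑ l, t x k l := by
          have h1 : (1:ℤ) ≤ ∑ k, ∑ l, (t x k l - t y k l) := by
            have hnn : ∀ k, (0:ℤ) ≤ ∑ l, (t x k l - t y k l) :=
              fun k => Finset.sum_nonneg fun l _ => sub_nonneg.mpr (htle k l)
            have h2 : (1:ℤ) ≤ ∑ l, (t x i l - t y i l) := by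
              rw [← htij]
              exact Finset.single_le_sum (fun l _ => sub_nonneg.mpr (htle i l))
                (Finset.mem_univ j)
            calc (1:ℤ) ≤ ∑ l, (t x i l - t y i l) := h2
              _ ≤ ∑ k, ∑ l, (t x k l - t y k l) :=
                  Finset.single_le_sum (fun k _ => hnn k) (Finset.mem_univ i)
          have : ∑ k, ∑ l, (t x k l - t y k l)
              = (∑ k, ∑ l, t x k l) - ∑ k, ∑ l, t y k l := by
            rw [← Finset.sum_sub_distrib]
            apply Finset.sum_congr rfl
            intro k _
            rw [← Finset.sum_sub_distrib]
          linarith [h1, this ▸ h1]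
        have hSQle : SQ y ≤ SQ x := by
          rw [hSQ x, hSQ y, hL]
          linarith
        have hSQeq : SQ y = SQ x := le_antisymm hSQle (hmin y)
        have hmin' : ∀ w, SQ y ≤ SQ w := fun w => hSQeq ▸ hmin w
        have hcard' : (Finset.univ.filter (fun k => y k = true)).card ≤ N := by
          have hsub : Finset.univ.filter (fun k => y k = true)
              ⊆ (Finset.univ.filter (fun k => x k = true)).erase i := by
            intro k hk
            simp only [Finset.mem_filter, Finset.mem_univ, true_and] at hk
            have hki : k ≠ i := by
              intro h; subst h; rw [hyi] at hk; exact Bool.false_ne_true hk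
            rw [Finset.mem_erase]
            refine ⟨hki, ?_⟩
            simp only [Finset.mem_filter, Finset.mem_univ, true_and]
            rw [← hyk k hki]; exact hk
          have hmem : i ∈ Finset.univ.filter (fun k => x k = true) := by simp [hxi]
          have := Finset.card_le_card hsub
          have := Finset.card_erase_of_mem hmem
          omega
        obtain ⟨z, hz1, hz2, hz3⟩ := ih y hcard' hmin'
        exact ⟨z, hz1.trans hSQeq, hz2, hz3⟩

/-- From any minimizer `x` of the clique-QUBO objective `SQ` one can obtain
`z` with `SQ z = SQ x` and zero penalty, so that the support of `z` is a clique of `G`. -/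
theorem stmt_7 (n : ℕ) (G : SimpleGraph (Fin n)) [DecidableRel G.Adj]
    (SQ : (Fin n → Bool) → ℤ)
    (hSQ : ∀ x, SQ x = -(∑ i, (if x i then (1:ℤ) else 0))
      + ∑ i, ∑ j, if i < j ∧ ¬ G.Adj i j then
          (if x i then (1:ℤ) else 0) * (if x j then (1:ℤ) else 0) else 0)
    (x : Fin n → Bool) (hmin : ∀ y, SQ x ≤ SQ y) :
    ∃ z : Fin n → Bool, SQ z = SQ x ∧
      (∀ i j, i < j → ¬ G.Adj i j →
        (if z i then (1:ℤ) else 0) * (if z j then (1:ℤ) else 0) = 0) ∧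
      G.IsClique {i | z i = true} := by
  exact stmt7_aux n G SQ hSQ _ x le_rfl hmin
end

section
/- Clique-QUBO correctness: For a simple undirected graph G on {1,…,n} with clique number ω(G), the minimum over x ∈ {0,1}^n of SQ(x) = −∑_i x_i + ∑_{(i,j)∈\bar{E}, i<j} x_i x_j equals −ω(G), where \bar{E} is the set of non-adjacent unordered pairs. -/
private def pen {n : ℕ} (G : SimpleGraph (Fin n)) [DecidableRel G.Adj]
    (S : Finset (Fin n)) : ℤ :=
  ∑ i, ∑ j, if i < j ∧ ¬ G.Adj i j ∧ i ∈ S ∧ j ∈ S then (1:ℤ) else 0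

private lemma pen_eq_sum_prod {n : ℕ} (G : SimpleGraph (Fin n)) [DecidableRel G.Adj]
    (S : Finset (Fin n)) :
    pen G S = ∑ p ∈ Finset.univ ×ˢ Finset.univ,
      (if p.1 < p.2 ∧ ¬ G.Adj p.1 p.2 ∧ p.1 ∈ S ∧ p.2 ∈ S then (1:ℤ) else 0) := by
  rw [Finset.sum_product]; rfl

private lemma pen_clique_zero {n : ℕ} (G : SimpleGraph (Fin n)) [DecidableRel G.Adj]
    {S : Finset (Fin n)} (hc : ∀ i ∈ S, ∀ j ∈ S, i ≠ j → G.Adj i j) :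
    pen G S = 0 := by
  refine Finset.sum_eq_zero fun i _ => Finset.sum_eq_zero fun j _ => ?_
  split_ifs with h
  · exact absurd (hc i h.2.2.1 j h.2.2.2 (ne_of_lt h.1)) h.2.1
  · rfl

private lemma key_lower {n : ℕ} (G : SimpleGraph (Fin n)) [DecidableRel G.Adj]
    (ω : ℕ) (hω2 : ∀ k ∈ {k : ℕ | ∃ s : Finset (Fin n), G.IsNClique k s}, k ≤ ω) :
    ∀ S : Finset (Fin n), -(ω : ℤ) ≤ -(S.card : ℤ) + pen G S := by
  intro S
  induction S using Finset.strongInduction with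
  | _ S ih =>
    by_cases hc : ∀ i ∈ S, ∀ j ∈ S, i ≠ j → G.Adj i j
    · have hclique : G.IsNClique S.card S := ⟨fun a ha b hb hab => hc a ha b hb hab, rfl⟩
      have hcard : S.card ≤ ω := hω2 _ ⟨S, hclique⟩
      rw [pen_clique_zero G hc]
      have : (S.card : ℤ) ≤ (ω : ℤ) := by exact_mod_cast hcard
      linarith
    · push_neg at hc
      obtain ⟨i, hi, j, hj, hij, hadj⟩ := hc
      -- get a < b, both in S, not adjacent
      obtain ⟨a, b, ha, hb, hab, hnadj⟩ :
          ∃ a b, a ∈ S ∧ b ∈ S ∧ a < b ∧ ¬ G.Adj a b := by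
        rcases lt_or_gt_of_ne hij with h | h
        · exact ⟨i, j, hi, hj, h, hadj⟩
        · exact ⟨j, i, hj, hi, h, fun h' => hadj h'.symm⟩
      set S' := S.erase b with hS'
      have hss : S' ⊂ S := Finset.erase_ssubset hb
      have hih := ih S' hss
      have hcard' : (S'.card : ℤ) = (S.card : ℤ) - 1 := by
        rw [hS', Finset.card_erase_of_mem hb]
        have : 1 ≤ S.card := Finset.card_pos.mpr ⟨b, hb⟩
        push_cast [Nat.cast_sub this]
        ring
      have hpen : pen G S' + 1 ≤ pen G S := by
        have step : ∀ p ∈ Finset.univ ×ˢ (Finset.univ : Finset (Fin n)),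
            (if p.1 < p.2 ∧ ¬ G.Adj p.1 p.2 ∧ p.1 ∈ S' ∧ p.2 ∈ S' then (1:ℤ) else 0)
              + (if p = (a, b) then (1:ℤ) else 0)
            ≤ (if p.1 < p.2 ∧ ¬ G.Adj p.1 p.2 ∧ p.1 ∈ S ∧ p.2 ∈ S then (1:ℤ) else 0) := by
          intro p _
          by_cases hp : p = (a, b)
          · subst hp
            have hbS' : b ∉ S' := Finset.notMem_erase b S
            simp only [hbS', and_false, if_false, if_pos rfl]
            simp [hab, hnadj, ha, hb]
          · simp only [hp, if_false, add_zero]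
            split_ifs with h1 h2
            · exact le_refl 1
            · exact absurd ⟨h1.1, h1.2.1, Finset.mem_of_mem_erase h1.2.2.1,
                Finset.mem_of_mem_erase h1.2.2.2⟩ h2
            · exact zero_le_one
            · exact le_refl 0
        have hsum := Finset.sum_le_sum step
        rw [Finset.sum_add_distrib, Finset.sum_ite_eq' _ (a,b) (fun _ => (1:ℤ))] at hsum
        simp only [Finset.mem_product, Finset.mem_univ, and_self, if_pos] at hsum
        rw [pen_eq_sum_prod, pen_eq_sum_prod]
        exact hsum
      linarith

/-- The minimum of the clique-QUBO objective `SQ` over binary vectors equals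
`-ω(G)`, where `ω(G)` is the clique number of `G`. -/
theorem stmt_8 (n : ℕ) (G : SimpleGraph (Fin n)) [DecidableRel G.Adj]
    (ω : ℕ) (hω : IsGreatest {k : ℕ | ∃ s : Finset (Fin n), G.IsNClique k s} ω)
    (μ : ℤ)
    (hμ : IsLeast {v : ℤ | ∃ x : Fin n → Bool,
      -(∑ i, (if x i then (1:ℤ) else 0))
        + (∑ i, ∑ j, if i < j ∧ ¬ G.Adj i j then
            (if x i then (1:ℤ) else 0) * (if x j then (1:ℤ) else 0) else 0) = v} μ) :
    μ = -(ω : ℤ) := by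
  -- objective rewriting: for any x, the value equals -(card S) + pen G S with S = support
  have hval : ∀ x : Fin n → Bool,
      -(∑ i, (if x i then (1:ℤ) else 0))
        + (∑ i, ∑ j, if i < j ∧ ¬ G.Adj i j then
            (if x i then (1:ℤ) else 0) * (if x j then (1:ℤ) else 0) else 0)
      = -(((Finset.univ.filter (fun i => x i = true)).card : ℤ))
        + pen G (Finset.univ.filter (fun i => x i = true)) := by
    intro x
    congr 1
    · congr 1
      rw [Finset.sum_boole]
    · unfold pen
      refine Finset.sum_congr rfl fun i _ => Finset.sum_congr rfl fun j _ => ?_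
      by_cases h1 : i < j ∧ ¬ G.Adj i j <;> by_cases h2 : x i <;> by_cases h3 : x j <;>
        simp_all
  -- lower bound: μ ≥ -ω
  have hlow : -(ω : ℤ) ≤ μ := by
    obtain ⟨x, hx⟩ := hμ.1
    rw [hval x] at hx
    rw [← hx]
    exact key_lower G ω hω.2 _
  -- upper bound: μ ≤ -ω
  have hup : μ ≤ -(ω : ℤ) := by
    obtain ⟨s, hs⟩ := hω.1
    refine hμ.2 ⟨fun i => decide (i ∈ s), ?_⟩
    have hfilter : Finset.univ.filter (fun i => decide (i ∈ s) = true) = s := by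
      ext i; simp
    rw [hval, hfilter, pen_clique_zero G
      (fun a ha b hb hab => hs.1 ha hb hab), hs.2]
    ring
  linarith
end

section
/- Forced-variable lemma for QUBO with upper-bounded coefficients: Let Q be an n×n upper triangular integer matrix with all entries q_{ij} < u for a positive constant u. If q_{kℓ} < −2(n−1)·u for some k ≤ ℓ, then every minimizer z ∈ {0,1}^n of f(z) = ∑_{i≤j} q_{ij} z_i z_j satisfies z_k·z_ℓ = 1 (i.e., z_k = z_ℓ = 1). -/
/-!
Let `z` be a minimizer with `z_k z_ℓ = 0` and raise both `z_k` and `z_ℓ` to `1`. The only terms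
of the objective that change are those of the pairs `i ≤ j` meeting `{k, ℓ}`. The term of `(k, ℓ)`
itself changes by exactly `q_{kℓ}`; every other such pair is the sorted pair of `k` or `ℓ` with one
of the remaining `n - 1` indices, so there are at most `2(n - 1)` of them, and each term grows by at
most `u`. So the objective strictly decreases, contradicting minimality.
-/

open Finset

namespace Qubo

variable {ι R : Type*} [LinearOrder ι] [CommRing R] [LinearOrder R]

def ind (b : Bool) : R := if b then 1 else 0

def term (Q : Matrix ι ι R) (x : ι → Bool) (p : ι × ι) : R :=
  if p.1 ≤ p.2 then Q p.1 p.2 * ind (x p.1) * ind (x p.2) else 0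

def raisePair (z : ι → Bool) (k ℓ : ι) (i : ι) : Bool :=
  z i || decide (i = k ∨ i = ℓ)

theorem le_raisePair (z : ι → Bool) (k ℓ : ι) : z ≤ raisePair z k ℓ := fun i ↦ by
  simp +contextual [raisePair, Bool.le_iff_imp]

theorem raisePair_of_ne {z : ι → Bool} {k ℓ i : ι} (hk : i ≠ k) (hℓ : i ≠ ℓ) :
    raisePair z k ℓ i = z i := by
  simp [raisePair, hk, hℓ]

theorem ind_mul_ind_sub_le {q u : R} (hq : q ≤ u) (hu : 0 ≤ u) {a b c d : Bool}
    (hac : a ≤ c) (hbd : b ≤ d) :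
    q * ind c * ind d - q * ind a * ind b ≤ u := by
  cases a <;> cases b <;> cases c <;> cases d <;> simp_all [ind, Bool.le_iff_imp]

variable [Fintype ι]

def objective (Q : Matrix ι ι R) (x : ι → Bool) : R :=
  ∑ i, ∑ j, term Q x (i, j)

def touchingPairs (k ℓ : ι) : Finset (ι × ι) :=
  {p | p.1 ≤ p.2 ∧ (p.1 = k ∨ p.1 = ℓ ∨ p.2 = k ∨ p.2 = ℓ) ∧ p ≠ (k, ℓ)}

theorem touchingPairs_subset {k ℓ : ι} (hkl : k ≤ ℓ) :
    touchingPairs k ℓ ⊆ ((univ.erase ℓ).image fun i ↦ (min k i, max k i)) ∪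
      ((univ.erase k).image fun i ↦ (min ℓ i, max ℓ i)) := by
  rintro ⟨i, j⟩ hp
  simp only [touchingPairs, mem_filter, mem_univ, true_and, ne_eq, Prod.mk.injEq] at hp
  obtain ⟨hij, hi | hi | hj | hj, hne⟩ := hp
  · exact mem_union_left _ (mem_image.2 ⟨j, by grind, by grind⟩)
  · exact mem_union_right _ (mem_image.2 ⟨j, by grind, by grind⟩)
  · exact mem_union_left _ (mem_image.2 ⟨i, by grind, by grind⟩)
  · exact mem_union_right _ (mem_image.2 ⟨i, by grind, by grind⟩)

theorem card_touchingPairs_le {k ℓ : ι} (hkl : k ≤ ℓ) :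
    #(touchingPairs k ℓ) ≤ 2 * (Fintype.card ι - 1) := by
  calc #(touchingPairs k ℓ)
      ≤ #((univ.erase ℓ).image fun i ↦ (min k i, max k i)) +
        #((univ.erase k).image fun i ↦ (min ℓ i, max ℓ i)) :=
        (card_le_card (touchingPairs_subset hkl)).trans (card_union_le _ _)
    _ ≤ #(univ.erase ℓ) + #(univ.erase k) := add_le_add card_image_le card_image_le
    _ = 2 * (Fintype.card ι - 1) := by simp [card_erase_of_mem, two_mul]

theorem term_raisePair_sub_le {Q : Matrix ι ι R} {u : R} (hu : 0 ≤ u) (hQ : ∀ i j, Q i j ≤ u)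
    {z : ι → Bool} {k ℓ : ι} (hkl : k ≤ ℓ) (hz : (z k && z ℓ) = false) (p : ι × ι) :
    term Q (raisePair z k ℓ) p - term Q z p ≤
      (if p = (k, ℓ) then Q k ℓ else 0) + if p ∈ touchingPairs k ℓ then u else 0 := by
  by_cases hp : p = (k, ℓ)
  · subst hp
    cases hk : z k <;> cases hℓ : z ℓ <;> simp_all [term, raisePair, ind, touchingPairs]
  rw [if_neg hp, zero_add]
  obtain ⟨i, j⟩ := p
  split_ifs with hmem
  · unfold term
    split_ifs
    · exact ind_mul_ind_sub_le (hQ i j) hu (le_raisePair z k ℓ i) (le_raisePair z k ℓ j)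
    · simpa using hu
  · simp only [touchingPairs, mem_filter, mem_univ, true_and, not_and] at hmem
    by_cases hij : i ≤ j
    · have hi : raisePair z k ℓ i = z i := raisePair_of_ne (by grind) (by grind)
      have hj : raisePair z k ℓ j = z j := raisePair_of_ne (by grind) (by grind)
      simp [term, hi, hj]
    · simp [term, hij]

variable [IsStrictOrderedRing R]

theorem objective_raisePair_sub_le {Q : Matrix ι ι R} {u : R} (hu : 0 ≤ u) (hQ : ∀ i j, Q i j ≤ u)
    {z : ι → Bool} {k ℓ : ι} (hkl : k ≤ ℓ) (hz : (z k && z ℓ) = false) :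
    objective Q (raisePair z k ℓ) - objective Q z ≤
      Q k ℓ + 2 * ((Fintype.card ι : R) - 1) * u := by
  have hcard : (#(touchingPairs k ℓ) : R) ≤ 2 * ((Fintype.card ι : R) - 1) := by
    have hpos : 1 ≤ Fintype.card ι := Fintype.card_pos_iff.2 ⟨k⟩
    have := (Nat.cast_le (α := R)).2 (card_touchingPairs_le hkl)
    push_cast [Nat.cast_sub hpos] at this
    exact this
  calc objective Q (raisePair z k ℓ) - objective Q z
      = ∑ p, (term Q (raisePair z k ℓ) p - term Q z p) := by
        simp only [objective, ← Fintype.sum_prod_type', sum_sub_distrib]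
    _ ≤ ∑ p, ((if p = (k, ℓ) then Q k ℓ else 0) + if p ∈ touchingPairs k ℓ then u else 0) :=
        sum_le_sum fun p _ ↦ term_raisePair_sub_le hu hQ hkl hz p
    _ = Q k ℓ + #(touchingPairs k ℓ) * u := by
        rw [sum_add_distrib, Fintype.sum_ite_eq', Fintype.sum_ite_mem, sum_const, nsmul_eq_mul]
    _ ≤ Q k ℓ + 2 * ((Fintype.card ι : R) - 1) * u := by gcongr

theorem forced_pair_of_isMin {Q : Matrix ι ι R} {u : R} (hu : 0 ≤ u) (hQ : ∀ i j, Q i j ≤ u)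
    {k ℓ : ι} (hkl : k ≤ ℓ) (hneg : Q k ℓ < -(2 * ((Fintype.card ι : R) - 1) * u))
    {z : ι → Bool} (hmin : ∀ x, objective Q z ≤ objective Q x) : z k ∧ z ℓ := by
  by_contra hz
  have hgain := objective_raisePair_sub_le hu hQ hkl (z := z) (by simpa using hz)
  have hle := hmin (raisePair z k ℓ)
  linarith

end Qubo

theorem stmt_10_general (n : ℕ) (u : ℤ) (hu : 0 < u) (Q : Matrix (Fin n) (Fin n) ℤ)
    (hub : ∀ i j, Q i j < u)
    (k ℓ : Fin n) (hkl : k ≤ ℓ) (hneg : Q k ℓ < -(2 * ((n : ℤ) - 1) * u))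
    (z : Fin n → Bool)
    (hmin : ∀ x : Fin n → Bool,
      (∑ i, ∑ j, if i ≤ j then Q i j * (if z i then (1:ℤ) else 0)
          * (if z j then (1:ℤ) else 0) else 0)
      ≤ ∑ i, ∑ j, if i ≤ j then Q i j * (if x i then (1:ℤ) else 0)
          * (if x j then (1:ℤ) else 0) else 0) :
    (if z k then (1:ℤ) else 0) * (if z ℓ then (1:ℤ) else 0) = 1 := by
  obtain ⟨hk, hℓ⟩ := Qubo.forced_pair_of_isMin (z := z) hu.le (fun i j ↦ (hub i j).le) hkl
    (by simpa using hneg) hmin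
  simp [hk, hℓ]

/-- Forced-variable lemma.  If `Q` is upper triangular with all entries `< u`
(`u > 0`) and `Q k ℓ < -2(n-1)·u` for some `k ≤ ℓ`, then every minimizer `z` of the QUBO
objective has `z_k · z_ℓ = 1`. -/
theorem stmt_10 (n : ℕ) (u : ℤ) (hu : 0 < u) (Q : Matrix (Fin n) (Fin n) ℤ)
    (htri : ∀ i j : Fin n, j < i → Q i j = 0)
    (hub : ∀ i j, Q i j < u)
    (k ℓ : Fin n) (hkl : k ≤ ℓ) (hneg : Q k ℓ < -(2 * ((n : ℤ) - 1) * u))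
    (z : Fin n → Bool)
    (hmin : ∀ x : Fin n → Bool,
      (∑ i, ∑ j, if i ≤ j then Q i j * (if z i then (1:ℤ) else 0)
          * (if z j then (1:ℤ) else 0) else 0)
      ≤ ∑ i, ∑ j, if i ≤ j then Q i j * (if x i then (1:ℤ) else 0)
          * (if x j then (1:ℤ) else 0) else 0) :
    (if z k then (1:ℤ) else 0) * (if z ℓ then (1:ℤ) else 0) = 1 :=
  stmt_10_general n u hu Q hub k ℓ hkl hneg z hmin
end

section
/- Decomposition lemma for UQUBO: Let Q be an n×n upper triangular integer matrix with all q_{ij} < u (u > 0 constant). Let I_B = {(i,j) : q_{ij} < −2(n−1)u}, let A agree with Q outside I_B and be 0 on I_B. Then min over all binary x of ∑_{i≤j} q_{ij} x_i x_j equals (min over binary x with x_i = x_j = 1 for all (i,j) ∈ I_B of ∑_{i≤j} a_{ij} x_i x_j) + ∑_{(i,j)∈I_B} q_{ij}. -/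
private lemma key_bound (u : ℤ) (hu : 0 < u) (QV a1 a2 b1 b2 : ℤ) (hQV : QV ≤ u - 1)
    (h1 : a1 = 0 ∨ a1 = 1) (h2 : a2 = 0 ∨ a2 = 1) (h3 : b1 = 0 ∨ b1 = 1) (h4 : b2 = 0 ∨ b2 = 1)
    (hm1 : a1 ≤ b1) (hm2 : a2 ≤ b2) :
    QV * b1 * b2 - QV * a1 * a2 ≤ u - 1 := by
  rcases h1 with rfl | rfl <;> rcases h2 with rfl | rfl <;>
    rcases h3 with rfl | rfl <;> rcases h4 with rfl | rfl <;> nlinarith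

private def objf (n : ℕ) (M : Matrix (Fin n) (Fin n) ℤ) (x : Fin n → Bool) : ℤ :=
  ∑ i, ∑ j, if i ≤ j then M i j * (if x i then (1:ℤ) else 0) * (if x j then (1:ℤ) else 0) else 0

private lemma sum_identity (n : ℕ) (u : ℤ) (hu : 0 < u)
    (Q A : Matrix (Fin n) (Fin n) ℤ)
    (htri : ∀ i j : Fin n, j < i → Q i j = 0)
    (hA : ∀ i j, A i j = if Q i j < -(2 * ((n : ℤ) - 1) * u) then 0 else Q i j)
    (x : Fin n → Bool)
    (hx : ∀ i j : Fin n, Q i j < -(2 * ((n : ℤ) - 1) * u) → x i = true ∧ x j = true) :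
    objf n Q x = objf n A x
      + ∑ i, ∑ j, if Q i j < -(2 * ((n : ℤ) - 1) * u) then Q i j else 0 := by
  unfold objf
  rw [← Finset.sum_add_distrib]
  refine Finset.sum_congr rfl fun i _ => ?_
  rw [← Finset.sum_add_distrib]
  refine Finset.sum_congr rfl fun j _ => ?_
  have hn1 : (1:ℤ) ≤ (n:ℤ) := by exact_mod_cast i.pos
  have hc0 : -(2 * ((n : ℤ) - 1) * u) ≤ 0 := by nlinarith
  by_cases hij : i ≤ j
  · by_cases hQ : Q i j < -(2 * ((n : ℤ) - 1) * u)
    · obtain ⟨h1, h2⟩ := hx i j hQ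
      simp [hij, hQ, hA, h1, h2]
    · simp [hij, hQ, hA]
  · have hji : j < i := lt_of_not_ge hij
    have h0 := htri i j hji
    have hnot : ¬ Q i j < -(2 * ((n : ℤ) - 1) * u) := by
      rw [h0]; exact not_lt.2 hc0
    simp [hij, hnot]

set_option maxHeartbeats 2000000 in
private lemma forced (n : ℕ) (u : ℤ) (hu : 0 < u) (Q : Matrix (Fin n) (Fin n) ℤ)
    (htri : ∀ i j : Fin n, j < i → Q i j = 0)
    (hub : ∀ i j, Q i j < u)
    (x : Fin n → Bool)
    (hmin : ∀ y : Fin n → Bool, objf n Q x ≤ objf n Q y)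
    (i j : Fin n) (hQ : Q i j < -(2 * ((n : ℤ) - 1) * u)) :
    x i = true ∧ x j = true := by
  by_contra hcon
  have hn1 : (1:ℤ) ≤ (n:ℤ) := by exact_mod_cast i.pos
  have hc0 : -(2 * ((n : ℤ) - 1) * u) ≤ 0 := by nlinarith
  have hij : i ≤ j := by
    by_contra h
    have h0 := htri i j (lt_of_not_ge h)
    rw [h0] at hQ
    linarith
  classical
  set y : Fin n → Bool := fun k => if k = i ∨ k = j then true else x k with hy
  have hyi : y i = true := by simp [hy]
  have hyj : y j = true := by simp [hy]
  have hymono : ∀ k, x k = true → y k = true := by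
    intro k hk
    by_cases h : k = i ∨ k = j <;> simp [hy, h, hk]
  -- term functions
  set tx : Fin n × Fin n → ℤ := fun p =>
    if p.1 ≤ p.2 then Q p.1 p.2 * (if x p.1 then (1:ℤ) else 0) * (if x p.2 then (1:ℤ) else 0) else 0
    with htx
  set ty : Fin n × Fin n → ℤ := fun p =>
    if p.1 ≤ p.2 then Q p.1 p.2 * (if y p.1 then (1:ℤ) else 0) * (if y p.2 then (1:ℤ) else 0) else 0
    with hty
  have hox : objf n Q x = ∑ p : Fin n × Fin n, tx p := by
    rw [Fintype.sum_prod_type]; rfl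
  have hoy : objf n Q y = ∑ p : Fin n × Fin n, ty p := by
    rw [Fintype.sum_prod_type]; rfl
  -- the set of side terms
  set T : Finset (Fin n × Fin n) :=
    ((Finset.univ.filter
      (fun p : Fin n × Fin n => p.1 ≤ p.2 ∧ (p.1 = i ∨ p.1 = j ∨ p.2 = i ∨ p.2 = j))).erase (i,j))
    with hT
  -- cardinality of T
  have hTcard : T.card ≤ (n - 1) + (n - 1) := by
    set φ : Fin n × Fin n → Fin n × Bool := fun p =>
      if p.1 = i then (p.2, false)
      else if p.2 = i then (p.1, false)
      else if p.1 = j then (p.2, true)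
      else (p.1, true) with hφ
    set tgt : Finset (Fin n × Bool) :=
      ((Finset.univ.erase j) ×ˢ ({false} : Finset Bool)) ∪
      ((Finset.univ.erase i) ×ˢ ({true} : Finset Bool)) with htgt
    have eφ1 : ∀ p : Fin n × Fin n, p.1 = i → φ p = (p.2, false) := by
      intro p h; simp only [hφ]; rw [if_pos h]
    have eφ2 : ∀ p : Fin n × Fin n, ¬ p.1 = i → p.2 = i → φ p = (p.1, false) := by
      intro p h1 h2; simp only [hφ]; rw [if_neg h1, if_pos h2]
    have eφ3 : ∀ p : Fin n × Fin n, ¬ p.1 = i → ¬ p.2 = i → p.1 = j → φ p = (p.2, true) := by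
      intro p h1 h2 h3; simp only [hφ]; rw [if_neg h1, if_neg h2, if_pos h3]
    have eφ4 : ∀ p : Fin n × Fin n, ¬ p.1 = i → ¬ p.2 = i → ¬ p.1 = j → φ p = (p.1, true) := by
      intro p h1 h2 h3; simp only [hφ]; rw [if_neg h1, if_neg h2, if_neg h3]
    have hmaps : ∀ p ∈ T, φ p ∈ tgt := by
      intro p hp
      simp only [hT, Finset.mem_erase, Finset.mem_filter, Finset.mem_univ, true_and] at hp
      obtain ⟨hpne, hple, hptc⟩ := hp
      simp only [htgt, Finset.mem_union, Finset.mem_product, Finset.mem_erase,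
        Finset.mem_univ, Finset.mem_singleton, true_and, and_true]
      by_cases h1 : p.1 = i
      · rw [eφ1 p h1]
        left
        refine ⟨fun h2 => hpne (Prod.ext h1 h2), rfl⟩
      · by_cases h2 : p.2 = i
        · rw [eφ2 p h1 h2]
          left
          refine ⟨fun h3 => ?_, rfl⟩
          rw [h3, h2] at hple
          have hji : i = j := le_antisymm hij hple
          exact hpne (Prod.ext (h3.trans hji.symm) (h2.trans hji))
        · by_cases h3 : p.1 = j
          · rw [eφ3 p h1 h2 h3]
            right
            exact ⟨h2, rfl⟩
          · rw [eφ4 p h1 h2 h3]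
            right
            exact ⟨h1, rfl⟩
    have hinj : Set.InjOn φ T := by
      intro p hp q hq hpq
      simp only [hT, Finset.coe_erase, Finset.coe_filter, Set.mem_diff, Set.mem_setOf_eq,
        Finset.mem_univ, true_and, Set.mem_singleton_iff] at hp hq
      obtain ⟨⟨hple, hptc⟩, hpne⟩ := hp
      obtain ⟨⟨hqle, hqtc⟩, hqne⟩ := hq
      by_cases hp1 : p.1 = i
      · by_cases hq1 : q.1 = i
        · rw [eφ1 p hp1, eφ1 q hq1, Prod.mk.injEq] at hpq
          exact Prod.ext (hp1.trans hq1.symm) hpq.1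
        · by_cases hq2 : q.2 = i
          · rw [eφ1 p hp1, eφ2 q hq1 hq2, Prod.mk.injEq] at hpq
            rw [hp1] at hple
            rw [hq2] at hqle
            rw [← hpq.1] at hqle
            have hpi : p.2 = i := le_antisymm hqle hple
            rw [hpq.1] at hpi
            exact absurd hpi hq1
          · by_cases hq3 : q.1 = j
            · rw [eφ1 p hp1, eφ3 q hq1 hq2 hq3, Prod.mk.injEq] at hpq
              exact absurd hpq.2 (by simp)
            · rw [eφ1 p hp1, eφ4 q hq1 hq2 hq3, Prod.mk.injEq] at hpq
              exact absurd hpq.2 (by simp)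
      · by_cases hp2 : p.2 = i
        · by_cases hq1 : q.1 = i
          · rw [eφ2 p hp1 hp2, eφ1 q hq1, Prod.mk.injEq] at hpq
            rw [hq1] at hqle
            rw [hp2] at hple
            rw [hpq.1] at hple
            have hqi : q.2 = i := le_antisymm hple hqle
            rw [← hpq.1] at hqi
            exact absurd hqi hp1
          · by_cases hq2 : q.2 = i
            · rw [eφ2 p hp1 hp2, eφ2 q hq1 hq2, Prod.mk.injEq] at hpq
              exact Prod.ext hpq.1 (hp2.trans hq2.symm)
            · by_cases hq3 : q.1 = j
              · rw [eφ2 p hp1 hp2, eφ3 q hq1 hq2 hq3, Prod.mk.injEq] at hpq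
                exact absurd hpq.2 (by simp)
              · rw [eφ2 p hp1 hp2, eφ4 q hq1 hq2 hq3, Prod.mk.injEq] at hpq
                exact absurd hpq.2 (by simp)
        · by_cases hq1 : q.1 = i
          · by_cases hp3 : p.1 = j
            · rw [eφ3 p hp1 hp2 hp3, eφ1 q hq1, Prod.mk.injEq] at hpq
              exact absurd hpq.2 (by simp)
            · rw [eφ4 p hp1 hp2 hp3, eφ1 q hq1, Prod.mk.injEq] at hpq
              exact absurd hpq.2 (by simp)
          · by_cases hq2 : q.2 = i
            · by_cases hp3 : p.1 = j
              · rw [eφ3 p hp1 hp2 hp3, eφ2 q hq1 hq2, Prod.mk.injEq] at hpq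
                exact absurd hpq.2 (by simp)
              · rw [eφ4 p hp1 hp2 hp3, eφ2 q hq1 hq2, Prod.mk.injEq] at hpq
                exact absurd hpq.2 (by simp)
            · by_cases hp3 : p.1 = j
              · by_cases hq3 : q.1 = j
                · rw [eφ3 p hp1 hp2 hp3, eφ3 q hq1 hq2 hq3, Prod.mk.injEq] at hpq
                  exact Prod.ext (hp3.trans hq3.symm) hpq.1
                · have hq4 : q.2 = j := by tauto
                  rw [eφ3 p hp1 hp2 hp3, eφ4 q hq1 hq2 hq3, Prod.mk.injEq] at hpq
                  rw [hp3] at hple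
                  rw [hq4] at hqle
                  rw [← hpq.1] at hqle
                  have hpj : p.2 = j := le_antisymm hqle hple
                  rw [hpq.1] at hpj
                  exact absurd hpj hq3
              · have hp4 : p.2 = j := by tauto
                by_cases hq3 : q.1 = j
                · rw [eφ4 p hp1 hp2 hp3, eφ3 q hq1 hq2 hq3, Prod.mk.injEq] at hpq
                  rw [hq3] at hqle
                  rw [hp4] at hple
                  rw [hpq.1] at hple
                  have hqj : q.2 = j := le_antisymm hple hqle
                  rw [← hpq.1] at hqj
                  exact absurd hqj hp3
                · have hq4 : q.2 = j := by tauto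
                  rw [eφ4 p hp1 hp2 hp3, eφ4 q hq1 hq2 hq3, Prod.mk.injEq] at hpq
                  exact Prod.ext hpq.1 (hp4.trans hq4.symm)
    have h1 := Finset.card_le_card_of_injOn φ hmaps hinj
    have ec1 : ((Finset.univ.erase j) ×ˢ ({false} : Finset Bool)).card = n - 1 := by
      rw [Finset.card_product, Finset.card_singleton,
        Finset.card_erase_of_mem (Finset.mem_univ _), Finset.card_univ, Fintype.card_fin, mul_one]
    have ec2 : ((Finset.univ.erase i) ×ˢ ({true} : Finset Bool)).card = n - 1 := by
      rw [Finset.card_product, Finset.card_singleton,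
        Finset.card_erase_of_mem (Finset.mem_univ _), Finset.card_univ, Fintype.card_fin, mul_one]
    have h2 : tgt.card ≤ (n - 1) + (n - 1) := by
      refine le_trans (Finset.card_union_le _ _) ?_
      rw [ec1, ec2]
    omega
  -- pointwise bound of the difference on the erased set
  have hpt : ∀ p ∈ (Finset.univ : Finset (Fin n × Fin n)).erase (i,j),
      ty p - tx p ≤ (if p ∈ T then u - 1 else 0) := by
    intro p hp
    have hpne : p ≠ (i,j) := Finset.ne_of_mem_erase hp
    by_cases hle : p.1 ≤ p.2
    · by_cases htc : p.1 = i ∨ p.1 = j ∨ p.2 = i ∨ p.2 = j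
      · have hmem : p ∈ T := by
          simp only [hT, Finset.mem_erase, Finset.mem_filter, Finset.mem_univ, true_and]
          exact ⟨hpne, hle, htc⟩
        rw [if_pos hmem]
        have hQle : Q p.1 p.2 ≤ u - 1 := by have := hub p.1 p.2; omega
        have e1 : (if x p.1 then (1:ℤ) else 0) = 0 ∨ (if x p.1 then (1:ℤ) else 0) = 1 := by
          by_cases h : x p.1 <;> simp [h]
        have e2 : (if x p.2 then (1:ℤ) else 0) = 0 ∨ (if x p.2 then (1:ℤ) else 0) = 1 := by
          by_cases h : x p.2 <;> simp [h]
        have e3 : (if y p.1 then (1:ℤ) else 0) = 0 ∨ (if y p.1 then (1:ℤ) else 0) = 1 := by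
          by_cases h : y p.1 <;> simp [h]
        have e4 : (if y p.2 then (1:ℤ) else 0) = 0 ∨ (if y p.2 then (1:ℤ) else 0) = 1 := by
          by_cases h : y p.2 <;> simp [h]
        have m1 : (if x p.1 then (1:ℤ) else 0) ≤ (if y p.1 then (1:ℤ) else 0) := by
          by_cases h : x p.1
          · simp [h, hymono p.1 h]
          · rcases e3 with h3 | h3 <;> rw [if_neg h, h3] <;> norm_num
        have m2 : (if x p.2 then (1:ℤ) else 0) ≤ (if y p.2 then (1:ℤ) else 0) := by
          by_cases h : x p.2
          · simp [h, hymono p.2 h]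
          · rcases e4 with h4 | h4 <;> rw [if_neg h, h4] <;> norm_num
        simp only [hty, htx, if_pos hle]
        exact key_bound u hu _ _ _ _ _ hQle e1 e2 e3 e4 m1 m2
      · rw [if_neg ?_]
        · have hx1 : y p.1 = x p.1 := by
            simp only [hy]
            rw [if_neg (by tauto)]
          have hx2 : y p.2 = x p.2 := by
            simp only [hy]
            rw [if_neg (by tauto)]
          simp only [hty, htx, hx1, hx2]
          exact le_of_eq (sub_self _)
        · simp only [hT, Finset.mem_erase, Finset.mem_filter, Finset.mem_univ, true_and]
          tauto
    · rw [if_neg ?_]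
      · simp only [hty, htx, if_neg hle]
        exact le_of_eq (sub_self _)
      · simp only [hT, Finset.mem_erase, Finset.mem_filter, Finset.mem_univ, true_and]
        tauto
  -- the key strict decrease
  have hmemij : ((i,j) : Fin n × Fin n) ∈ (Finset.univ : Finset (Fin n × Fin n)) :=
    Finset.mem_univ _
  have hdij : ty (i,j) - tx (i,j) = Q i j := by
    have h1 : ty (i,j) = Q i j := by
      simp only [hty]
      simp [hij, hyi, hyj]
    have h2 : tx (i,j) = 0 := by
      simp only [htx]
      rcases not_and_or.mp hcon with h | h
      · have hxi : x i = false := by simpa using h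
        simp [hij, hxi]
      · have hxj : x j = false := by simpa using h
        simp [hij, hxj]
    rw [h1, h2, sub_zero]
  have hTsub : T ⊆ (Finset.univ : Finset (Fin n × Fin n)).erase (i,j) := by
    intro p hp
    simp only [hT, Finset.mem_erase, Finset.mem_filter, Finset.mem_univ, true_and] at hp
    simp [hp.1]
  have hsum2 : ∑ p ∈ (Finset.univ : Finset (Fin n × Fin n)).erase (i,j),
      (if p ∈ T then u - 1 else 0) = T.card * (u - 1) := by
    rw [Finset.sum_ite_mem]
    rw [Finset.inter_eq_right.mpr hTsub]
    rw [Finset.sum_const, nsmul_eq_mul]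
  have hTc : (T.card : ℤ) ≤ 2 * ((n:ℤ) - 1) := by
    have hn : 1 ≤ n := i.pos
    omega
  have hkey : objf n Q y < objf n Q x := by
    have hsplit : objf n Q y - objf n Q x
        = (ty (i,j) - tx (i,j))
          + ∑ p ∈ (Finset.univ : Finset (Fin n × Fin n)).erase (i,j), (ty p - tx p) := by
      rw [hox, hoy, ← Finset.sum_sub_distrib]
      exact (Finset.add_sum_erase _ _ hmemij).symm
    have hbound : ∑ p ∈ (Finset.univ : Finset (Fin n × Fin n)).erase (i,j), (ty p - tx p)
        ≤ T.card * (u - 1) := by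
      rw [← hsum2]
      exact Finset.sum_le_sum hpt
    have hmul : (T.card : ℤ) * (u - 1) ≤ 2 * ((n:ℤ) - 1) * (u - 1) := by
      have h1 : (0:ℤ) ≤ u - 1 := by omega
      exact mul_le_mul_of_nonneg_right hTc h1
    have : objf n Q y - objf n Q x < 0 := by
      rw [hsplit, hdij]
      nlinarith
    linarith
  exact absurd (hmin y) (not_le.2 hkey)

/-- Decomposition lemma for UQUBO.  With `I_B` the set of extremely negative
entries (`Q i j < -2(n-1)u`), and `A` agreeing with `Q` outside `I_B` and `0` on `I_B`,
the minimum of the full objective equals the minimum of the `A`-objective restricted to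
assignments fixing the `I_B`-variables to `1`, plus the sum of the `I_B`-entries of `Q`. -/
theorem stmt_11 (n : ℕ) (u : ℤ) (hu : 0 < u) (Q : Matrix (Fin n) (Fin n) ℤ)
    (htri : ∀ i j : Fin n, j < i → Q i j = 0)
    (hub : ∀ i j, Q i j < u)
    (A : Matrix (Fin n) (Fin n) ℤ)
    (hA : ∀ i j, A i j = if Q i j < -(2 * ((n : ℤ) - 1) * u) then 0 else Q i j)
    (μ : ℤ)
    (hμ : IsLeast {v : ℤ | ∃ x : Fin n → Bool,
      (∑ i, ∑ j, if i ≤ j then Q i j * (if x i then (1:ℤ) else 0)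
          * (if x j then (1:ℤ) else 0) else 0) = v} μ)
    (ν : ℤ)
    (hν : IsLeast {v : ℤ | ∃ x : Fin n → Bool,
      (∀ i j : Fin n, Q i j < -(2 * ((n : ℤ) - 1) * u) → x i = true ∧ x j = true) ∧
      (∑ i, ∑ j, if i ≤ j then A i j * (if x i then (1:ℤ) else 0)
          * (if x j then (1:ℤ) else 0) else 0) = v} ν) :
    μ = ν + ∑ i, ∑ j, if Q i j < -(2 * ((n : ℤ) - 1) * u) then Q i j else 0 := by
  obtain ⟨xν, hxνP, hxνv⟩ := hν.1
  obtain ⟨xμ, hxμv⟩ := hμ.1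
  have hle1 : μ ≤ ν + ∑ i, ∑ j, if Q i j < -(2 * ((n : ℤ) - 1) * u) then Q i j else 0 := by
    have hid := sum_identity n u hu Q A htri hA xν hxνP
    have hmem : objf n Q xν ∈ {v : ℤ | ∃ x : Fin n → Bool,
      (∑ i, ∑ j, if i ≤ j then Q i j * (if x i then (1:ℤ) else 0)
          * (if x j then (1:ℤ) else 0) else 0) = v} := ⟨xν, rfl⟩
    have := hμ.2 hmem
    rw [hid] at this
    have hνeq : objf n A xν = ν := hxνv
    rw [hνeq] at this
    exact this
  have hle2 : ν + (∑ i, ∑ j, if Q i j < -(2 * ((n : ℤ) - 1) * u) then Q i j else 0) ≤ μ := by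
    have hmin : ∀ y : Fin n → Bool, objf n Q xμ ≤ objf n Q y := by
      intro y
      have hmem : objf n Q y ∈ {v : ℤ | ∃ x : Fin n → Bool,
        (∑ i, ∑ j, if i ≤ j then Q i j * (if x i then (1:ℤ) else 0)
            * (if x j then (1:ℤ) else 0) else 0) = v} := ⟨y, rfl⟩
      have h1 := hμ.2 hmem
      have h2 : objf n Q xμ = μ := hxμv
      rw [h2]
      exact h1
    have hP : ∀ i j : Fin n, Q i j < -(2 * ((n : ℤ) - 1) * u) → xμ i = true ∧ xμ j = true :=
      fun i j h => forced n u hu Q htri hub xμ hmin i j h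
    have hid := sum_identity n u hu Q A htri hA xμ hP
    have hmem : objf n A xμ ∈ {v : ℤ | ∃ x : Fin n → Bool,
      (∀ i j : Fin n, Q i j < -(2 * ((n : ℤ) - 1) * u) → x i = true ∧ x j = true) ∧
      (∑ i, ∑ j, if i ≤ j then A i j * (if x i then (1:ℤ) else 0)
          * (if x j then (1:ℤ) else 0) else 0) = v} := ⟨xμ, hP, rfl⟩
    have h1 := hν.2 hmem
    have h2 : objf n Q xμ = μ := hxμv
    rw [h2] at hid
    linarith
  linarith
end
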